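/- For every n ≥ 1, ν₁, ν₂ ≥ 0 and x ≥ 0, the second central moment of the Stancu-type operator satisfies L_n^{(ν₁,ν₂)}((s−x)²; x) = [A₂''(nx·h(1))·n²/(A₂(nx·h(1))·(n+ν₂)²) − 2A₂'(nx·h(1))·n/(A₂(nx·h(1))·(n+ν₂)) + 1]·x² + {(1+2ν₁+h''(1))·A₂'(nx·h(1))·n/(A₂(nx·h(1))·(n+ν₂)²) + 2A₁'(h(1))·A₂'(nx·h(1))·n/(A₁(h(1))·A₂(nx·h(1))·(n+ν₂)²) − 2(A₁'(h(1))/A₁(h(1)) + ν₁)/(n+ν₂)}·x + ν₁²/(n+ν₂)² + [(1+2ν₁+h''(1))·A₁'(h(1)) + A₁''(h(1))]/(A₁(h(1))·(n+ν₂)²). -/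

import Mathlib

/-- Data for generalized Brenke polynomials: analytic functions `A₁, A₂, h`
given by power series on `{t : |t| < R}` (`R > 1`), with `A₁, A₂ > 0` on `ℝ`,
`h'(1) = 1`, and polynomials `p k` satisfying the generating relation
`A₁(h(t)) · A₂(x · h(t)) = ∑ₖ p k x · tᵏ` with `p k x ≥ 0` for `x ≥ 0`. -/
structure BrenkeData where
  R : ℝ
  A₁ : ℝ → ℝ
  A₂ : ℝ → ℝ
  h : ℝ → ℝ
  a₁ : ℕ → ℝ
  a₂ : ℕ → ℝ
  c : ℕ → ℝ
  p : ℕ → ℝ → ℝ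
  hR : 1 < R
  ha₁ : a₁ 0 ≠ 0
  ha₂ : ∀ k, a₂ k ≠ 0
  hc0 : c 0 = 0
  hc1 : c 1 ≠ 0
  hA₁ : ∀ t : ℝ, |t| < R → HasSum (fun k => a₁ k * t ^ k) (A₁ t)
  hA₂ : ∀ t : ℝ, |t| < R → HasSum (fun k => a₂ k * t ^ k) (A₂ t)
  hh : ∀ t : ℝ, |t| < R → HasSum (fun k => c k * t ^ k) (h t)
  hA₁pos : ∀ t : ℝ, 0 < A₁ t
  hA₂pos : ∀ t : ℝ, 0 < A₂ t
  hh1 : deriv h 1 = 1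
  hgen : ∀ x t : ℝ, |t| < R → HasSum (fun k => p k x * t ^ k) (A₁ (h t) * A₂ (x * h t))
  hpos : ∀ (k : ℕ) (x : ℝ), 0 ≤ x → 0 ≤ p k x

/-- The Stancu type operator `L_n^{(ν₁,ν₂)}` including generalized Brenke polynomials. -/
noncomputable def stancuL (B : BrenkeData) (ν₁ ν₂ : ℝ) (n : ℕ) (f : ℝ → ℝ) (x : ℝ) : ℝ :=
  (B.A₁ (B.h 1) * B.A₂ (n * x * B.h 1))⁻¹ *
    ∑' k : ℕ, B.p k (n * x) * f ((k + ν₁) / (n + ν₂))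

/-!
For `y = n x`, the moments `∑ p_k(y)`, `∑ k p_k(y)` and `∑ k (k - 1) p_k(y)` are `φ(1)`, `φ'(1)`
and `φ''(1)` for the generating function `φ(t) = A₁(h t) A₂(y h t)`, by termwise differentiation
of its power series, which converges on `|t| < R` with `R > 1`. Expanding
`((k + ν₁)/(n + ν₂) - x)²` in the basis `k (k - 1)`, `k`, `1` reduces the central moment to these
three values, and the product and chain rules express `φ'(1)`, `φ''(1)` through `A₁`, `A₂`, `h`.
The points `h(1)` and `y h(1)` may lie outside the discs where `A₁`, `A₂` are given by their
series; analyticity there comes from `A₁ ∘ h` and `A₂ ∘ (y h)` being analytic at `1` (quotients of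
generating functions) together with `h'(1) = 1 ≠ 0`, which lets one invert `h` locally.
-/

open Filter Topology Metric

section PowerSeries

variable {R : ℝ} {c : ℕ → ℝ} {F : ℝ → ℝ}

lemma summable_succ_mul_abs_mul_pow {r s : ℝ} (hs : Summable fun k => c k * s ^ k)
    (hr : 0 ≤ r) (hrs : r < |s|) :
    Summable fun k : ℕ => ((k : ℝ) + 1) * |c (k + 1)| * r ^ k := by
  obtain ⟨M, hM⟩ : ∃ M, ∀ k, |c k| * |s| ^ k ≤ M := by
    obtain ⟨M, hM⟩ := hs.tendsto_atTop_zero.abs.bddAbove_range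
    exact ⟨M, fun k => by simpa [abs_mul, abs_pow] using hM (Set.mem_range_self k)⟩
  have hs0 : 0 < |s| := hr.trans_lt hrs
  have hq : ‖r / |s|‖ < 1 := by
    rwa [Real.norm_eq_abs, abs_of_nonneg (by positivity), div_lt_one hs0]
  have hgeom : Summable fun k : ℕ => ((k : ℝ) + 1) * (r / |s|) ^ k :=
    ((summable_pow_mul_geometric_of_norm_lt_one 1 hq).add
      (summable_geometric_of_norm_lt_one hq)).congr fun k => by ring
  refine .of_nonneg_of_le (fun k => by positivity) (fun k => ?_) (hgeom.mul_left (M / |s|))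
  have hc : |c (k + 1)| ≤ M / |s| ^ (k + 1) := by
    rw [le_div_iff₀ (by positivity)]; exact hM (k + 1)
  calc ((k : ℝ) + 1) * |c (k + 1)| * r ^ k
      ≤ ((k : ℝ) + 1) * (M / |s| ^ (k + 1)) * r ^ k := by gcongr
    _ = M / |s| * (((k : ℝ) + 1) * (r / |s|) ^ k) := by
        rw [div_pow, pow_succ]; field_simp

theorem hasSum_deriv_of_forall_hasSum
    (hF : ∀ t : ℝ, |t| < R → HasSum (fun k => c k * t ^ k) (F t)) {t : ℝ} (ht : |t| < R) :
    HasSum (fun k : ℕ => ((k : ℝ) + 1) * c (k + 1) * t ^ k) (deriv F t) := by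
  obtain ⟨r, htr, hrR⟩ := exists_between ht
  obtain ⟨s, hrs, hsR⟩ := exists_between hrR
  have hr0 : 0 < r := (abs_nonneg t).trans_lt htr
  have habs : |s| = s := abs_of_pos (hr0.trans hrs)
  have hu := summable_succ_mul_abs_mul_pow (hF s (by rwa [habs])).summable hr0.le (by rwa [habs])
  have hmem : t ∈ ball (0 : ℝ) r := by simpa using htr
  have hbound : ∀ (k : ℕ), ∀ w ∈ ball (0 : ℝ) r,
      ‖((k : ℝ) + 1) * c (k + 1) * w ^ k‖ ≤ ((k : ℝ) + 1) * |c (k + 1)| * r ^ k := by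
    intro k w hw
    have hw : |w| ≤ r := by simpa using (mem_ball_zero_iff.1 hw).le
    rw [Real.norm_eq_abs, abs_mul, abs_mul, abs_pow]
    gcongr
    exact (abs_of_nonneg (by positivity)).le
  have htail : ∀ w, |w| < R → HasSum (fun k => c (k + 1) * w ^ (k + 1)) (F w - c 0) :=
    fun w hw => by simpa using (hasSum_nat_add_iff' 1).2 (hF w hw)
  have hderiv : HasDerivAt (fun w => ∑' k, c (k + 1) * w ^ (k + 1))
      (∑' k : ℕ, ((k : ℝ) + 1) * c (k + 1) * t ^ k) t := by
    refine hasDerivAt_tsum_of_isPreconnected (g := fun k w => c (k + 1) * w ^ (k + 1))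
      (g' := fun k w => ((k : ℝ) + 1) * c (k + 1) * w ^ k) hu isOpen_ball
      (convex_ball _ _).isPreconnected (fun k w _ => ?_) hbound hmem (htail t ht).summable hmem
    simpa [mul_comm, mul_assoc, mul_left_comm]
      using (hasDerivAt_pow (k + 1) w).const_mul (c (k + 1))
  have hF_eq : F =ᶠ[𝓝 t] fun w => c 0 + ∑' k, c (k + 1) * w ^ (k + 1) := by
    filter_upwards [isOpen_ball.mem_nhds (show t ∈ ball (0 : ℝ) R by simpa using ht)] with w hw
    rw [(htail w (by simpa using hw)).tsum_eq]; ring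
  rw [((hderiv.const_add (c 0)).congr_of_eventuallyEq hF_eq).deriv]
  exact (Summable.of_norm_bounded hu fun k => hbound k t hmem).hasSum

theorem hasSum_deriv_deriv_of_forall_hasSum
    (hF : ∀ t : ℝ, |t| < R → HasSum (fun k => c k * t ^ k) (F t)) {t : ℝ} (ht : |t| < R) :
    HasSum (fun k : ℕ => ((k : ℝ) + 1) * ((k : ℝ) + 2) * c (k + 2) * t ^ k)
      (deriv (deriv F) t) := by
  convert hasSum_deriv_of_forall_hasSum (fun t ht => hasSum_deriv_of_forall_hasSum hF ht) ht
    using 2 with k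
  rw [show k + 1 + 1 = k + 2 from rfl]; push_cast; ring

theorem hasSum_natCast_mul_of_forall_hasSum
    (hF : ∀ t : ℝ, |t| < R → HasSum (fun k => c k * t ^ k) (F t)) (hR : 1 < R) :
    HasSum (fun k : ℕ => (k : ℝ) * c k) (deriv F 1) := by
  rw [← hasSum_nat_add_iff' 1]
  simpa using hasSum_deriv_of_forall_hasSum hF (t := 1) (by simpa using hR)

theorem hasSum_natCast_mul_natCast_sub_one_mul_of_forall_hasSum
    (hF : ∀ t : ℝ, |t| < R → HasSum (fun k => c k * t ^ k) (F t)) (hR : 1 < R) :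
    HasSum (fun k : ℕ => (k : ℝ) * ((k : ℝ) - 1) * c k) (deriv (deriv F) 1) := by
  have h := hasSum_deriv_deriv_of_forall_hasSum hF (t := 1) (by simpa using hR)
  rw [← hasSum_nat_add_iff' 2]
  norm_num [Finset.sum_range_succ]
  exact h.congr_fun fun k => by ring

theorem analyticAt_of_forall_hasSum
    (hF : ∀ t : ℝ, |t| < R → HasSum (fun k => c k * t ^ k) (F t)) {t : ℝ} (ht : |t| < R) :
    AnalyticAt ℝ F t := by
  have hradius : ENNReal.ofReal R ≤ (FormalMultilinearSeries.ofScalars ℝ c).radius := by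
    refine ENNReal.le_of_forall_nnreal_lt fun r hr => ?_
    have hrR : |(r : ℝ)| < R := by
      rw [NNReal.abs_eq]; exact (ENNReal.coe_lt_ofReal).1 hr
    refine FormalMultilinearSeries.le_radius_of_tendsto _ (l := 0) ?_
    simpa [FormalMultilinearSeries.ofScalars_norm, abs_mul, abs_pow]
      using (hF r hrR).summable.tendsto_atTop_zero.norm
  have hps : HasFPowerSeriesOnBall F (FormalMultilinearSeries.ofScalars ℝ c) 0
      (ENNReal.ofReal R) :=
    ⟨hradius, by simpa using (abs_nonneg t).trans_lt ht, fun {y} hy => by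
      simpa [FormalMultilinearSeries.ofScalars_apply_eq, mul_comm] using hF y (by simpa using hy)⟩
  exact hps.analyticAt_of_mem (by simpa using ht)

end PowerSeries

section SecondDerivative

variable {u v g G : ℝ → ℝ} {a : ℝ}

theorem AnalyticAt.deriv_deriv_mul (hu : AnalyticAt ℝ u a) (hv : AnalyticAt ℝ v a) :
    deriv (deriv fun t => u t * v t) a =
      deriv (deriv u) a * v a + 2 * deriv u a * deriv v a + u a * deriv (deriv v) a := by
  have hderiv :
      deriv (fun t => u t * v t) =ᶠ[𝓝 a] fun t => deriv u t * v t + u t * deriv v t := by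
    filter_upwards [hu.eventually_analyticAt, hv.eventually_analyticAt] with t hut hvt
    exact deriv_mul hut.differentiableAt hvt.differentiableAt
  have hderiv2 : HasDerivAt (fun t => deriv u t * v t + u t * deriv v t)
      (deriv (deriv u) a * v a + deriv u a * deriv v a
        + (deriv u a * deriv v a + u a * deriv (deriv v) a)) a :=
    (hu.deriv.differentiableAt.hasDerivAt.mul hv.differentiableAt.hasDerivAt).add
      (hu.differentiableAt.hasDerivAt.mul hv.deriv.differentiableAt.hasDerivAt)
  rw [hderiv.deriv_eq, hderiv2.deriv]
  ring

theorem AnalyticAt.deriv_deriv_comp (hG : AnalyticAt ℝ G (g a)) (hg : AnalyticAt ℝ g a) :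
    deriv (deriv fun t => G (g t)) a =
      deriv (deriv G) (g a) * deriv g a ^ 2 + deriv G (g a) * deriv (deriv g) a := by
  have hderiv : deriv (fun t => G (g t)) =ᶠ[𝓝 a] fun t => deriv G (g t) * deriv g t := by
    filter_upwards [hg.continuousAt.eventually hG.eventually_analyticAt,
      hg.eventually_analyticAt] with t hGt hgt
    exact deriv_comp t hGt.differentiableAt hgt.differentiableAt
  have hderiv2 : HasDerivAt (fun t => deriv G (g t) * deriv g t)
      (deriv (deriv G) (g a) * deriv g a * deriv g a + deriv G (g a) * deriv (deriv g) a) a :=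
    (hG.deriv.differentiableAt.hasDerivAt.comp a hg.differentiableAt.hasDerivAt).mul
      hg.deriv.differentiableAt.hasDerivAt
  rw [hderiv.deriv_eq, hderiv2.deriv]
  ring

end SecondDerivative

namespace BrenkeData

variable (B : BrenkeData)

def genFun (y : ℝ) : ℝ → ℝ := fun t => B.A₁ (B.h t) * B.A₂ (y * B.h t)

theorem analyticAt_h : AnalyticAt ℝ B.h 1 :=
  analyticAt_of_forall_hasSum B.hh (by simpa using B.hR)

theorem analyticAt_genFun (y : ℝ) : AnalyticAt ℝ (B.genFun y) 1 :=
  analyticAt_of_forall_hasSum (B.hgen y) (by simpa using B.hR)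

theorem analyticAt_A₁_comp_h : AnalyticAt ℝ (fun t => B.A₁ (B.h t)) 1 := by
  refine ((B.analyticAt_genFun 0).div analyticAt_const (B.hA₂pos 0).ne').congr
    (Eventually.of_forall fun t => ?_)
  simp [genFun, (B.hA₂pos 0).ne']

theorem analyticAt_A₂_comp_mul_h (y : ℝ) : AnalyticAt ℝ (fun t => B.A₂ (y * B.h t)) 1 := by
  refine ((B.analyticAt_genFun y).div B.analyticAt_A₁_comp_h (B.hA₁pos _).ne').congr
    (Eventually.of_forall fun t => ?_)
  simp [genFun, (B.hA₁pos _).ne']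

theorem analyticAt_A₁ : AnalyticAt ℝ B.A₁ (B.h 1) :=
  (analyticAt_comp_iff_of_deriv_ne_zero B.analyticAt_h (by simp [B.hh1])).1
    B.analyticAt_A₁_comp_h

theorem analyticAt_A₂ (y : ℝ) : AnalyticAt ℝ B.A₂ (y * B.h 1) := by
  rcases eq_or_ne y 0 with rfl | hy
  · simpa using analyticAt_of_forall_hasSum B.hA₂ (t := 0) (by simpa using B.hR.trans' one_pos)
  · have hg : AnalyticAt ℝ (fun t => y * B.h t) 1 := analyticAt_const.mul B.analyticAt_h
    refine (analyticAt_comp_iff_of_deriv_ne_zero (g := B.A₂) hg ?_).1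
      (B.analyticAt_A₂_comp_mul_h y)
    simpa [deriv_const_mul_field', B.hh1] using hy

theorem hasDerivAt_h : HasDerivAt B.h 1 1 := by
  simpa [B.hh1] using B.analyticAt_h.differentiableAt.hasDerivAt

theorem hasDerivAt_A₁_comp_h : HasDerivAt (fun t => B.A₁ (B.h t)) (deriv B.A₁ (B.h 1)) 1 :=
  (B.analyticAt_A₁.differentiableAt.hasDerivAt.comp 1 B.hasDerivAt_h).congr_deriv (mul_one _)

theorem hasDerivAt_A₂_comp_mul_h (y : ℝ) :
    HasDerivAt (fun t => B.A₂ (y * B.h t)) (deriv B.A₂ (y * B.h 1) * y) 1 :=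
  (B.analyticAt_A₂ y).differentiableAt.hasDerivAt.comp 1
    ((B.hasDerivAt_h.const_mul y).congr_deriv (mul_one _))

theorem deriv_genFun (y : ℝ) :
    deriv (B.genFun y) 1 =
      deriv B.A₁ (B.h 1) * B.A₂ (y * B.h 1) + B.A₁ (B.h 1) * (deriv B.A₂ (y * B.h 1) * y) :=
  (B.hasDerivAt_A₁_comp_h.mul (B.hasDerivAt_A₂_comp_mul_h y)).deriv

theorem deriv_deriv_genFun (y : ℝ) :
    deriv (deriv (B.genFun y)) 1 =
      deriv (deriv B.A₁) (B.h 1) * B.A₂ (y * B.h 1)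
        + 2 * deriv B.A₁ (B.h 1) * deriv B.A₂ (y * B.h 1) * y
        + B.A₁ (B.h 1) * deriv (deriv B.A₂) (y * B.h 1) * y ^ 2
        + (deriv B.A₁ (B.h 1) * B.A₂ (y * B.h 1) + B.A₁ (B.h 1) * deriv B.A₂ (y * B.h 1) * y)
          * deriv (deriv B.h) 1 := by
  unfold genFun
  rw [AnalyticAt.deriv_deriv_mul B.analyticAt_A₁_comp_h (B.analyticAt_A₂_comp_mul_h y),
    AnalyticAt.deriv_deriv_comp B.analyticAt_A₁ B.analyticAt_h,
    AnalyticAt.deriv_deriv_comp (g := fun t => y * B.h t) (B.analyticAt_A₂ y)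
      (analyticAt_const.mul B.analyticAt_h),
    B.hasDerivAt_A₁_comp_h.deriv, (B.hasDerivAt_A₂_comp_mul_h y).deriv]
  simp only [deriv_const_mul_field', B.hh1]
  ring

theorem hasSum_p (y : ℝ) : HasSum (fun k => B.p k y) (B.genFun y 1) := by
  simpa [genFun] using B.hgen y 1 (by simpa using B.hR)

theorem hasSum_p_mul_sq (y a d x : ℝ) :
    HasSum (fun k : ℕ => B.p k y * (((k : ℝ) + a) * d - x) ^ 2)
      (d ^ 2 * deriv (deriv (B.genFun y)) 1 + (d ^ 2 * (2 * a + 1) - 2 * x * d)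
        * deriv (B.genFun y) 1 + (a * d - x) ^ 2 * B.genFun y 1) := by
  have h2 := hasSum_natCast_mul_natCast_sub_one_mul_of_forall_hasSum (B.hgen y) B.hR
  have h1 := hasSum_natCast_mul_of_forall_hasSum (B.hgen y) B.hR
  refine (((h2.mul_left (d ^ 2)).add (h1.mul_left _)).add ((B.hasSum_p y).mul_left _)).congr_fun
    fun k => ?_
  ring

end BrenkeData

theorem stancuL_central_two_general (B : BrenkeData) (ν₁ ν₂ : ℝ) (n : ℕ) (x : ℝ) :
    stancuL B ν₁ ν₂ n (fun s => (s - x) ^ 2) x =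
      (deriv (deriv B.A₂) (n * x * B.h 1) * n ^ 2 / (B.A₂ (n * x * B.h 1) * (n + ν₂) ^ 2)
          - 2 * deriv B.A₂ (n * x * B.h 1) * n / (B.A₂ (n * x * B.h 1) * (n + ν₂)) + 1) * x ^ 2
        + ((1 + 2 * ν₁ + deriv (deriv B.h) 1) * deriv B.A₂ (n * x * B.h 1) * n
              / (B.A₂ (n * x * B.h 1) * (n + ν₂) ^ 2)
            + 2 * deriv B.A₁ (B.h 1) * deriv B.A₂ (n * x * B.h 1) * n
              / (B.A₁ (B.h 1) * B.A₂ (n * x * B.h 1) * (n + ν₂) ^ 2)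
            - 2 * (deriv B.A₁ (B.h 1) / B.A₁ (B.h 1) + ν₁) / (n + ν₂)) * x
        + ν₁ ^ 2 / (n + ν₂) ^ 2
        + ((1 + 2 * ν₁ + deriv (deriv B.h) 1) * deriv B.A₁ (B.h 1)
            + deriv (deriv B.A₁) (B.h 1)) / (B.A₁ (B.h 1) * (n + ν₂) ^ 2) := by
  have hA₁ := (B.hA₁pos (B.h 1)).ne'
  have hA₂ := (B.hA₂pos (n * x * B.h 1)).ne'
  simp only [stancuL, div_eq_mul_inv, mul_inv, ← inv_pow]
  rw [(B.hasSum_p_mul_sq (n * x) ν₁ (n + ν₂)⁻¹ x).tsum_eq, B.deriv_deriv_genFun, B.deriv_genFun,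
    BrenkeData.genFun]
  generalize ((n : ℝ) + ν₂)⁻¹ = d
  field_simp
  ring

/-- Second central moment `L_n^{(ν₁,ν₂)}((s−x)²; x)`. -/
theorem stancuL_central_two (B : BrenkeData) (ν₁ ν₂ : ℝ) (hν₁ : 0 ≤ ν₁) (hν₂ : 0 ≤ ν₂)
    (n : ℕ) (hn : 1 ≤ n) (x : ℝ) (hx : 0 ≤ x) :
    stancuL B ν₁ ν₂ n (fun s => (s - x) ^ 2) x =
      (deriv (deriv B.A₂) (n * x * B.h 1) * n ^ 2 / (B.A₂ (n * x * B.h 1) * (n + ν₂) ^ 2)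
          - 2 * deriv B.A₂ (n * x * B.h 1) * n / (B.A₂ (n * x * B.h 1) * (n + ν₂)) + 1) * x ^ 2
        + ((1 + 2 * ν₁ + deriv (deriv B.h) 1) * deriv B.A₂ (n * x * B.h 1) * n
              / (B.A₂ (n * x * B.h 1) * (n + ν₂) ^ 2)
            + 2 * deriv B.A₁ (B.h 1) * deriv B.A₂ (n * x * B.h 1) * n
              / (B.A₁ (B.h 1) * B.A₂ (n * x * B.h 1) * (n + ν₂) ^ 2)
            - 2 * (deriv B.A₁ (B.h 1) / B.A₁ (B.h 1) + ν₁) / (n + ν₂)) * x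
        + ν₁ ^ 2 / (n + ν₂) ^ 2
        + ((1 + 2 * ν₁ + deriv (deriv B.h) 1) * deriv B.A₁ (B.h 1)
            + deriv (deriv B.A₁) (B.h 1)) / (B.A₁ (B.h 1) * (n + ν₂) ^ 2) :=
  stancuL_central_two_general B ν₁ ν₂ n x
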